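/- For the positive-orthant constraint set C₊ = {p ∈ ℍⁿ_κ : p ≥ 0}, the intrinsic κ-projection of any p ∈ ℍⁿ_κ is P_{C₊}(p) = p⁺ / √(−κ⟨p⁺, p⁺⟩), where p⁺ is the componentwise positive part of p. -/

import Mathlib

/-! For `q ≥ 0`, replacing `p` by `p⁺` can only increase `⟨p, q⟩`, since the negative spatial
coordinates of `p` are dropped and the time coordinate is kept; moreover `⟨p⁺, p⁺⟩ ≤ ⟨p, p⟩ < 0`,
so `p⁺` is future timelike. By the reverse Cauchy–Schwarz inequality, `⟨x, ·⟩` is maximized over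
`ℍⁿ_κ` at the normalization of any future timelike `x`. For `x = p⁺` this point lies in `C₊`, and
there `⟨p, ·⟩` and `⟨p⁺, ·⟩` agree because `⟨p, p⁺⟩ = ⟨p⁺, p⁺⟩`. -/

noncomputable section

/-- Lorentzian inner product on ℝ^{n+1}. -/
def lip {n : ℕ} (x y : Fin (n+1) → ℝ) : ℝ :=
  (∑ i : Fin n, x i.castSucc * y i.castSucc) - x (Fin.last n) * y (Fin.last n)

/-- Lorentzian norm (of vectors with nonnegative self-product). -/
def lnorm {n : ℕ} (x : Fin (n+1) → ℝ) : ℝ := Real.sqrt (lip x x)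

/-- Euclidean dot product. -/
def edot {n : ℕ} (x y : Fin (n+1) → ℝ) : ℝ := ∑ i, x i * y i

/-- The matrix J = diag(1,…,1,−1) as a map. -/
def Jm {n : ℕ} (x : Fin (n+1) → ℝ) : Fin (n+1) → ℝ :=
  fun i => if i = Fin.last n then -(x i) else x i

/-- The κ-hyperbolic space form (hyperboloid model). -/
def Hyp {n : ℕ} (κ : ℝ) : Set (Fin (n+1) → ℝ) :=
  {p | lip p p = -1/κ ∧ 0 < p (Fin.last n)}

/-- Inverse hyperbolic cosine. -/
def arcosh (x : ℝ) : ℝ := Real.log (x + Real.sqrt (x^2 - 1))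

/-- Intrinsic distance on the κ-hyperbolic space form. -/
def dH {n : ℕ} (κ : ℝ) (p q : Fin (n+1) → ℝ) : ℝ :=
  (1 / Real.sqrt κ) * arcosh (-(κ * lip p q))

/-- Lorentzian projection onto the tangent space at p. -/
def projT {n : ℕ} (κ : ℝ) (p x : Fin (n+1) → ℝ) : Fin (n+1) → ℝ :=
  x + (κ * lip p x) • p

/-- Logarithm map of the κ-hyperbolic space form. -/
def logH {n : ℕ} (κ : ℝ) (p q : Fin (n+1) → ℝ) : Fin (n+1) → ℝ :=
  (dH κ p q / lnorm (projT κ p q)) • projT κ p q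

/-- Exponential map of the κ-hyperbolic space form. -/
def expH {n : ℕ} (κ : ℝ) (p v : Fin (n+1) → ℝ) : Fin (n+1) → ℝ :=
  Real.cosh (Real.sqrt κ * lnorm v) • p +
    (Real.sinh (Real.sqrt κ * lnorm v) / (Real.sqrt κ * lnorm v)) • v

/-- The cone spanned by a set. -/
def coneOf {n : ℕ} (C : Set (Fin (n+1) → ℝ)) : Set (Fin (n+1) → ℝ) :=
  {x | ∃ t : ℝ, 0 ≤ t ∧ ∃ p ∈ C, x = t • p}

/-- The Lorentz cone. -/
def LorentzCone {n : ℕ} : Set (Fin (n+1) → ℝ) :=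
  {x | lip x x ≤ 0 ∧ 0 ≤ x (Fin.last n)}

/-- The interior of the Lorentz cone. -/
def LorentzConeInt {n : ℕ} : Set (Fin (n+1) → ℝ) :=
  {x | lip x x < 0 ∧ 0 < x (Fin.last n)}

section Lorentz

variable {n : ℕ}

lemma lip_comm (x y : Fin (n+1) → ℝ) : lip x y = lip y x := by
  simp only [lip, mul_comm]

lemma lip_smul_right (a : ℝ) (x y : Fin (n+1) → ℝ) : lip x (a • y) = a * lip x y := by
  simp only [lip, Pi.smul_apply, smul_eq_mul, Finset.mul_sum, mul_sub]
  congr 1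
  · exact Finset.sum_congr rfl fun i _ => by ring
  · ring

lemma lip_smul_left (a : ℝ) (x y : Fin (n+1) → ℝ) : lip (a • x) y = a * lip x y := by
  rw [lip_comm, lip_smul_right, lip_comm]

lemma lip_sub_right (x y z : Fin (n+1) → ℝ) : lip x (y - z) = lip x y - lip x z := by
  simp only [lip, Pi.sub_apply, mul_sub, Finset.sum_sub_distrib]
  ring

lemma lip_sub_left (x y z : Fin (n+1) → ℝ) : lip (x - y) z = lip x z - lip y z := by
  rw [lip_comm, lip_sub_right, lip_comm, lip_comm z]

lemma lip_self_nonneg_of_lip_eq_zero {x w : Fin (n+1) → ℝ} (hx : lip x x < 0)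
    (hxw : lip x w = 0) : 0 ≤ lip w w := by
  simp only [lip] at hx hxw ⊢
  have hcs := Finset.sum_mul_sq_le_sq_mul_sq Finset.univ
    (fun i : Fin n => x i.castSucc) (fun i => w i.castSucc)
  have hx2 : 0 ≤ ∑ i : Fin n, x i.castSucc ^ 2 := Finset.sum_nonneg fun i _ => sq_nonneg _
  have hw2 : 0 ≤ ∑ i : Fin n, w i.castSucc ^ 2 := Finset.sum_nonneg fun i _ => sq_nonneg _
  simp only [sq] at hcs hx2 hw2 ⊢
  rw [sub_eq_zero.1 hxw] at hcs
  nlinarith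

lemma lip_mul_self_le_sq_lip {x : Fin (n+1) → ℝ} (hx : lip x x < 0) (y : Fin (n+1) → ℝ) :
    lip x x * lip y y ≤ lip x y ^ 2 := by
  -- split `y = α • x + w` with `w` Lorentz-orthogonal to `x`, hence spacelike
  set α := lip x y / lip x x
  have hα : α * lip x x = lip x y := div_mul_cancel₀ _ hx.ne
  have hxw : lip x (y - α • x) = 0 := by
    rw [lip_sub_right, lip_smul_right, hα, sub_self]
  have hww : lip (y - α • x) (y - α • x) = lip y y - α * lip x y := by
    rw [lip_sub_left, lip_smul_left, hxw, mul_zero, sub_zero, lip_sub_right, lip_smul_right,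
      lip_comm y x]
  have hw := lip_self_nonneg_of_lip_eq_zero hx hxw
  rw [hww, ← hα] at hw
  rw [← hα]
  nlinarith [mul_nonpos_of_nonpos_of_nonneg hx.le hw]

lemma lip_neg_of_mem_lorentzConeInt {x y : Fin (n+1) → ℝ} (hx : x ∈ LorentzConeInt)
    (hy : y ∈ LorentzConeInt) : lip x y < 0 := by
  obtain ⟨hxx, hxl⟩ := hx
  obtain ⟨hyy, hyl⟩ := hy
  simp only [lip] at hxx hyy ⊢
  have hcs := Finset.sum_mul_sq_le_sq_mul_sq Finset.univ
    (fun i : Fin n => x i.castSucc) (fun i => y i.castSucc)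
  have hx2 : 0 ≤ ∑ i : Fin n, x i.castSucc ^ 2 := Finset.sum_nonneg fun i _ => sq_nonneg _
  have hy2 : 0 ≤ ∑ i : Fin n, y i.castSucc ^ 2 := Finset.sum_nonneg fun i _ => sq_nonneg _
  simp only [sq] at hcs hx2 hy2
  nlinarith [mul_pos hxl hyl]

lemma Hyp_subset_lorentzConeInt {κ : ℝ} (hκ : 0 < κ) : Hyp (n := n) κ ⊆ LorentzConeInt :=
  fun _ ⟨hpp, hpl⟩ => ⟨by rw [hpp]; exact div_neg_of_neg_of_pos (by norm_num) hκ, hpl⟩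

/-- The radial projection of the Lorentz cone onto `Hyp κ`. -/
def hypNormalize (κ : ℝ) (x : Fin (n+1) → ℝ) : Fin (n+1) → ℝ :=
  (Real.sqrt (-(κ * lip x x)))⁻¹ • x

lemma hypNormalize_mem_Hyp {κ : ℝ} (hκ : 0 < κ) {x : Fin (n+1) → ℝ}
    (hx : x ∈ LorentzConeInt) : hypNormalize κ x ∈ Hyp κ := by
  obtain ⟨hxx, hxl⟩ := hx
  have hpos : 0 < -(κ * lip x x) := by nlinarith
  have hc := Real.sq_sqrt hpos.le
  have hcpos := Real.sqrt_pos.2 hpos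
  refine ⟨?_, mul_pos (inv_pos.2 hcpos) hxl⟩
  rw [hypNormalize, lip_smul_left, lip_smul_right]
  field_simp
  linear_combination hc

lemma lip_le_lip_hypNormalize {κ : ℝ} (hκ : 0 < κ) {x y : Fin (n+1) → ℝ}
    (hx : x ∈ LorentzConeInt) (hy : y ∈ Hyp κ) : lip x y ≤ lip x (hypNormalize κ x) := by
  have hxy := lip_neg_of_mem_lorentzConeInt hx (Hyp_subset_lorentzConeInt hκ hy)
  have hcs := lip_mul_self_le_sq_lip hx.1 y
  rw [hy.1] at hcs
  have hpos : 0 < -(κ * lip x x) := by nlinarith [hx.1]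
  have hc := Real.sq_sqrt hpos.le
  have hcpos := Real.sqrt_pos.2 hpos
  rw [hypNormalize, lip_smul_right, ← div_eq_inv_mul, le_div_iff₀ hcpos]
  have hsq : lip x x ^ 2 ≤ (lip x y * Real.sqrt (-(κ * lip x x))) ^ 2 := by
    rw [mul_pow, hc]
    calc lip x x ^ 2 = lip x x * (-1 / κ) * (-(κ * lip x x)) := by field_simp
      _ ≤ lip x y ^ 2 * (-(κ * lip x x)) := mul_le_mul_of_nonneg_right hcs hpos.le
  -- both sides are negative
  nlinarith [mul_neg_of_neg_of_pos hxy hcpos, hx.1]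

end Lorentz

section PosPart

variable {n : ℕ}

def posPartVec (p : Fin (n+1) → ℝ) : Fin (n+1) → ℝ := fun i => max (p i) 0

lemma posPartVec_nonneg (p : Fin (n+1) → ℝ) (i : Fin (n+1)) : 0 ≤ posPartVec p i :=
  le_max_right _ _

lemma lip_posPartVec_right (p : Fin (n+1) → ℝ) :
    lip p (posPartVec p) = lip (posPartVec p) (posPartVec p) := by
  have h (a : ℝ) : a * max a 0 = max a 0 * max a 0 := by
    rcases le_total a 0 with ha | ha <;> simp [ha]
  simp only [lip, posPartVec, h]

lemma lip_posPartVec_self_le {p : Fin (n+1) → ℝ} (hp : 0 ≤ p (Fin.last n)) :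
    lip (posPartVec p) (posPartVec p) ≤ lip p p := by
  have h (a : ℝ) : max a 0 * max a 0 ≤ a * a := by
    rcases le_total a 0 with ha | ha <;> simp [ha, mul_self_nonneg]
  simp only [lip, posPartVec, max_eq_left hp]
  exact sub_le_sub_right (Finset.sum_le_sum fun i _ => h _) _

lemma lip_le_lip_posPartVec_left {p q : Fin (n+1) → ℝ} (hp : 0 ≤ p (Fin.last n))
    (hq : ∀ i, 0 ≤ q i) : lip p q ≤ lip (posPartVec p) q := by
  simp only [lip, posPartVec, max_eq_left hp]
  exact sub_le_sub_right (Finset.sum_le_sum fun i _ =>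
    mul_le_mul_of_nonneg_right (le_max_left _ _) (hq _)) _

lemma posPartVec_mem_lorentzConeInt {κ : ℝ} (hκ : 0 < κ) {p : Fin (n+1) → ℝ}
    (hp : p ∈ Hyp κ) : posPartVec p ∈ LorentzConeInt := by
  have hpc := Hyp_subset_lorentzConeInt hκ hp
  refine ⟨(lip_posPartVec_self_le hp.2.le).trans_lt hpc.1, ?_⟩
  simpa only [posPartVec, max_eq_left hp.2.le] using hp.2

end PosPart

theorem intrinsic_projection_positive_orthant_general {n : ℕ} (κ : ℝ) (hκ : 0 < κ)
    (p : Fin (n+1) → ℝ) (hp : p ∈ Hyp κ)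
    (Pc : Fin (n+1) → ℝ)
    (hPuniq : ∀ y ∈ {q : Fin (n+1) → ℝ | q ∈ Hyp κ ∧ ∀ i, 0 ≤ q i},
      (∀ q ∈ {q : Fin (n+1) → ℝ | q ∈ Hyp κ ∧ ∀ i, 0 ≤ q i}, lip p q ≤ lip p y) → y = Pc) :
    Pc = (Real.sqrt (-(κ * lip (fun i => max (p i) 0) (fun i => max (p i) 0))))⁻¹ •
      (fun i => max (p i) 0) := by
  have hP := posPartVec_mem_lorentzConeInt hκ hp
  have hPnonneg (i : Fin (n+1)) : 0 ≤ hypNormalize κ (posPartVec p) i :=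
    mul_nonneg (inv_nonneg.2 (Real.sqrt_nonneg _)) (posPartVec_nonneg p i)
  refine (hPuniq _ ⟨hypNormalize_mem_Hyp hκ hP, hPnonneg⟩ fun q ⟨hq, hq0⟩ => ?_).symm
  calc lip p q ≤ lip (posPartVec p) q := lip_le_lip_posPartVec_left hp.2.le hq0
    _ ≤ lip (posPartVec p) (hypNormalize κ (posPartVec p)) := lip_le_lip_hypNormalize hκ hP hq
    _ = lip p (hypNormalize κ (posPartVec p)) := by
      rw [hypNormalize, lip_smul_right, lip_smul_right, lip_posPartVec_right]

/-- Formula for the intrinsic κ-projection onto the positive-orthant constraint set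
C₊ = {p ∈ ℍⁿ_κ : p ≥ 0}: P_{C₊}(p) = p⁺/√(−κ⟨p⁺,p⁺⟩), where P_{C₊}(p) is the
(unique) maximizer of ⟨p,·⟩ over C₊ and p⁺ is the componentwise positive part. -/
theorem intrinsic_projection_positive_orthant {n : ℕ} (κ : ℝ) (hκ : 0 < κ)
    (p : Fin (n+1) → ℝ) (hp : p ∈ Hyp κ)
    (Pc : Fin (n+1) → ℝ)
    (hPmem : Pc ∈ {q : Fin (n+1) → ℝ | q ∈ Hyp κ ∧ ∀ i, 0 ≤ q i})
    (hPmax : ∀ q ∈ {q : Fin (n+1) → ℝ | q ∈ Hyp κ ∧ ∀ i, 0 ≤ q i}, lip p q ≤ lip p Pc)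
    (hPuniq : ∀ y ∈ {q : Fin (n+1) → ℝ | q ∈ Hyp κ ∧ ∀ i, 0 ≤ q i},
      (∀ q ∈ {q : Fin (n+1) → ℝ | q ∈ Hyp κ ∧ ∀ i, 0 ≤ q i}, lip p q ≤ lip p y) → y = Pc) :
    Pc = (Real.sqrt (-(κ * lip (fun i => max (p i) 0) (fun i => max (p i) 0))))⁻¹ •
      (fun i => max (p i) 0) :=
  intrinsic_projection_positive_orthant_general κ hκ p hp Pc hPuniq
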